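/- For every event-driven program 𝒫 and every execution ρ of 𝒫, the induced trace τ(ρ) is axiomatically consistent; that is, the relation po ∪ rf ∪ fr ∪ co ∪ pb ∪ mo ∪ eo† ∪ qo of τ(ρ) is acyclic. -/

import Mathlib

/-!
Common framework for event-driven (ED) traces.

Handlers, shared variables and values are modelled as natural numbers;
events are (abstract) natural-number identifiers carrying a label.
-/

/-- Labels of events of event-driven programs: a read `⟨h,read,x⟩`, a write
`⟨h,write,x,v⟩`, a post `⟨h,post,h′⟩` or a get `⟨h,get⟩` of a handler `h`. -/
inductive EventLabel : Type where
  | read  (h x : ℕ)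
  | write (h x v : ℕ)
  | post  (h h' : ℕ)
  | get   (h : ℕ)
deriving DecidableEq

/-- The six basic relations of an ED trace. -/
inductive EDRel : Type where
  | po | rf | co | pb | mo | eo
deriving DecidableEq

/-- The handler of an event. -/
def EventLabel.hnd : EventLabel → ℕ
  | .read h _    => h
  | .write h _ _ => h
  | .post h _    => h
  | .get h       => h

def EventLabel.IsGet (l : EventLabel) : Prop := ∃ h, l = .get h
def EventLabel.IsPost (l : EventLabel) : Prop := ∃ h h', l = .post h h'
/-- `l` is a write event on variable `x`. -/
def EventLabel.IsWriteTo (l : EventLabel) (x : ℕ) : Prop := ∃ h v, l = .write h x v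
/-- `l` is a read event on variable `x`. -/
def EventLabel.IsReadOf (l : EventLabel) (x : ℕ) : Prop := ∃ h, l = .read h x
/-- `l` is a post event posting to handler `h'`. -/
def EventLabel.PostsTo (l : EventLabel) (h' : ℕ) : Prop := ∃ h, l = .post h h'

/-- An event-driven trace: a finite set `E` of events (natural-number
identifiers), a labelling of events, and a family of labelled edges. -/
structure EDTrace : Type where
  E : Finset ℕ
  lbl : ℕ → EventLabel
  rel : EDRel → ℕ → ℕ → Prop

namespace EDTrace

/-- The from-read relation `fr = rf⁻¹ ; co`. -/
def fr (τ : EDTrace) (a b : ℕ) : Prop := ∃ w, τ.rel .rf w a ∧ τ.rel .co w b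

/-- The queue order `qo = pb⁻¹ ; mo ; pb` on get events. -/
def qo (τ : EDTrace) (a b : ℕ) : Prop :=
  ∃ p q, τ.rel .pb p a ∧ τ.rel .pb q b ∧ τ.rel .mo p q

/-- `e` belongs to the (non-initial) message whose get event is `g`:
`g` is a get event and `e` is po-reachable from `g`. -/
def InMsg (τ : EDTrace) (g e : ℕ) : Prop :=
  (τ.lbl g).IsGet ∧ Relation.ReflTransGen (τ.rel .po) g e

/-- `eo†`: every event of a message is related to every event of an
eo-later message of the same handler. -/
def eoDag (τ : EDTrace) (a b : ℕ) : Prop :=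
  ∃ g g', τ.InMsg g a ∧ τ.InMsg g' b ∧ τ.rel .eo g g'

/-- One step of the happens-before relation:
`po ∪ rf ∪ fr ∪ co ∪ pb ∪ mo ∪ eo† ∪ qo`. -/
def step (τ : EDTrace) (a b : ℕ) : Prop :=
  τ.rel .po a b ∨ τ.rel .rf a b ∨ τ.fr a b ∨ τ.rel .co a b ∨
  τ.rel .pb a b ∨ τ.rel .mo a b ∨ τ.eoDag a b ∨ τ.qo a b

/-- The happens-before relation: transitive closure of
`po ∪ rf ∪ fr ∪ co ∪ pb ∪ mo ∪ eo† ∪ qo`. -/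
def hb (τ : EDTrace) : ℕ → ℕ → Prop := Relation.TransGen τ.step

/-- Axiomatic consistency: acyclicity of `po ∪ rf ∪ fr ∪ co ∪ pb ∪ mo ∪ eo† ∪ qo`. -/
def Consistent (τ : EDTrace) : Prop := ∀ e, ¬ τ.hb e e

/-- `e` belongs to the initial message of its handler: it belongs to no
message started by a get event. -/
def InInit (τ : EDTrace) (e : ℕ) : Prop :=
  e ∈ τ.E ∧ ¬ ∃ g ∈ τ.E, τ.InMsg g e

/-- Two events belong to the same message (either the message of a common
get event, or both to the initial message of the same handler). -/
def SameMsg (τ : EDTrace) (a b : ℕ) : Prop :=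
  (∃ g ∈ τ.E, τ.InMsg g a ∧ τ.InMsg g b) ∨
  (τ.InInit a ∧ τ.InInit b ∧ (τ.lbl a).hnd = (τ.lbl b).hnd)

/-- Well-formedness of the `po, rf, co, pb` components of a trace. -/
structure WFCore (τ : EDTrace) : Prop where
  edges_mem : ∀ r a b, τ.rel r a b → a ∈ τ.E ∧ b ∈ τ.E
  po_trans : Transitive (τ.rel .po)
  po_irrefl : ∀ a, ¬ τ.rel .po a a
  po_same_handler : ∀ a b, τ.rel .po a b → (τ.lbl a).hnd = (τ.lbl b).hnd
  po_msg : ∀ a b, τ.rel .po a b → τ.SameMsg a b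
  po_total : ∀ a ∈ τ.E, ∀ b ∈ τ.E, τ.SameMsg a b → a ≠ b →
    τ.rel .po a b ∨ τ.rel .po b a
  rf_lbl : ∀ a b, τ.rel .rf a b → ∃ x, (τ.lbl a).IsWriteTo x ∧ (τ.lbl b).IsReadOf x
  rf_unique : ∀ b ∈ τ.E, (∃ x, (τ.lbl b).IsReadOf x) → ∃! a, τ.rel .rf a b
  co_lbl : ∀ a b, τ.rel .co a b → ∃ x, (τ.lbl a).IsWriteTo x ∧ (τ.lbl b).IsWriteTo x
  co_trans : Transitive (τ.rel .co)
  co_irrefl : ∀ a, ¬ τ.rel .co a a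
  co_total : ∀ x, ∀ a ∈ τ.E, ∀ b ∈ τ.E, (τ.lbl a).IsWriteTo x → (τ.lbl b).IsWriteTo x →
    a ≠ b → τ.rel .co a b ∨ τ.rel .co b a
  pb_lbl : ∀ a b, τ.rel .pb a b → ∃ h h', τ.lbl a = .post h h' ∧ τ.lbl b = .get h'
  pb_get : ∀ b ∈ τ.E, (τ.lbl b).IsGet → ∃! a, τ.rel .pb a b
  pb_post : ∀ a ∈ τ.E, (τ.lbl a).IsPost → ∃! b, τ.rel .pb a b

/-- Well-formedness of a (total) ED trace: additionally `mo` totally orders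
the posts to each handler and `eo` totally orders the gets of each handler. -/
structure WF (τ : EDTrace) extends WFCore τ : Prop where
  mo_lbl : ∀ a b, τ.rel .mo a b → ∃ h', (τ.lbl a).PostsTo h' ∧ (τ.lbl b).PostsTo h'
  mo_trans : Transitive (τ.rel .mo)
  mo_irrefl : ∀ a, ¬ τ.rel .mo a a
  mo_total : ∀ h', ∀ a ∈ τ.E, ∀ b ∈ τ.E, (τ.lbl a).PostsTo h' → (τ.lbl b).PostsTo h' →
    a ≠ b → τ.rel .mo a b ∨ τ.rel .mo b a
  eo_lbl : ∀ a b, τ.rel .eo a b → ∃ h, τ.lbl a = .get h ∧ τ.lbl b = .get h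
  eo_trans : Transitive (τ.rel .eo)
  eo_irrefl : ∀ a, ¬ τ.rel .eo a a
  eo_total : ∀ h, ∀ a ∈ τ.E, ∀ b ∈ τ.E, τ.lbl a = .get h → τ.lbl b = .get h →
    a ≠ b → τ.rel .eo a b ∨ τ.rel .eo b a

/-- A partial trace: the `eo` and `mo` components are omitted (empty). -/
def IsPartial (τ : EDTrace) : Prop :=
  (∀ a b, ¬ τ.rel .eo a b) ∧ (∀ a b, ¬ τ.rel .mo a b)

/-- `τ'` extends the (partial) trace `τ`: same events, labels and
`po, rf, co, pb` edges; only `eo` and `mo` may be added. -/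
def Extends (τ' τ : EDTrace) : Prop :=
  τ'.E = τ.E ∧ τ'.lbl = τ.lbl ∧ τ'.rel .po = τ.rel .po ∧ τ'.rel .rf = τ.rel .rf ∧
  τ'.rel .co = τ.rel .co ∧ τ'.rel .pb = τ.rel .pb

/-- ED-consistency of a partial trace: it can be extended, by adding `eo`
edges (total per handler) and `mo` edges (total per target handler), to a
well-formed axiomatically consistent trace. -/
def EDConsistent (τ : EDTrace) : Prop :=
  ∃ τ' : EDTrace, Extends τ' τ ∧ τ'.WF ∧ τ'.Consistent

end EDTrace
/-!
Operational semantics of event-driven programs: handler threads with FIFO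
mailboxes, shared variables under sequential consistency, and messages whose
instructions are executed sequentially; `post` enqueues a message at the tail
of the target handler's mailbox, `get` dequeues the message at the head.
-/

/-- Instructions of a message: reads and writes of shared variables, and
posting of a (nested) message to a handler's mailbox. -/
inductive Instr : Type where
  | read  (x : ℕ)
  | write (x v : ℕ)
  | post  (h' : ℕ) (m : List Instr)

/-- A message is a sequence of instructions. -/
abbrev Msg := List Instr

/-- An event-driven program: finitely many handler threads, each with an
initial message. -/
structure Program : Type where
  numHandlers : ℕ
  init : ℕ → Msg

/-- A configuration: shared memory, per handler the currently executing
message (its identifier and remaining instructions), the FIFO mailbox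
(head = front of the queue) and a supply of fresh message identifiers. -/
structure Config : Type where
  mem  : ℕ → ℕ
  cur  : ℕ → Option (ℕ × Msg)
  mbox : ℕ → List (ℕ × Msg)
  fresh : ℕ

/-- A run event: its label together with the identifier of the message it
belongs to and, for post events, the identifier of the posted message. -/
structure REvent : Type where
  lbl : EventLabel
  mid : ℕ
  posted : ℕ

/-- Small-step transitions of event-driven programs, labelled by events. -/
inductive Step : Config → REvent → Config → Prop where
  | read (c : Config) (h mid x : ℕ) (rest : Msg) :
      c.cur h = some (mid, .read x :: rest) →
      Step c ⟨.read h x, mid, 0⟩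
        { c with cur := Function.update c.cur h (some (mid, rest)) }
  | write (c : Config) (h mid x v : ℕ) (rest : Msg) :
      c.cur h = some (mid, .write x v :: rest) →
      Step c ⟨.write h x v, mid, 0⟩
        { c with mem := Function.update c.mem x v,
                 cur := Function.update c.cur h (some (mid, rest)) }
  | post (c : Config) (h mid h' : ℕ) (m : Msg) (rest : Msg) :
      c.cur h = some (mid, .post h' m :: rest) →
      Step c ⟨.post h h', mid, c.fresh⟩
        { c with cur := Function.update c.cur h (some (mid, rest)),
                 mbox := Function.update c.mbox h' (c.mbox h' ++ [(c.fresh, m)]),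
                 fresh := c.fresh + 1 }
  | get (c : Config) (h mid mid' : ℕ) (m : Msg) (q : List (ℕ × Msg)) :
      c.cur h = some (mid, []) →
      c.mbox h = (mid', m) :: q →
      Step c ⟨.get h, mid', 0⟩
        { c with cur := Function.update c.cur h (some (mid', m)),
                 mbox := Function.update c.mbox h q }

/-- The initial configuration of a program: all variables 0, every handler
executing its initial message, all mailboxes empty. -/
def initConfig (P : Program) : Config where
  mem := fun _ => 0
  cur := fun h => if h < P.numHandlers then some (h, P.init h) else none
  mbox := fun _ => []
  fresh := P.numHandlers

/-- Multi-step executions producing a sequence of events. -/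
inductive Steps : Config → List REvent → Config → Prop where
  | nil (c : Config) : Steps c [] c
  | cons {c c' c'' : Config} {e : REvent} {l : List REvent} :
      Step c e c' → Steps c' l c'' → Steps c (e :: l) c''

/-- `ρ` is an execution of the program `P`. -/
def IsExec (P : Program) (ρ : List REvent) : Prop :=
  ∃ c, Steps (initConfig P) ρ c

/-- The event of `ρ` at position `i`. -/
def evAt (ρ : List REvent) (i : ℕ) : REvent := ρ.getD i ⟨.get 0, 0, 0⟩

/-- The trace `τ(ρ)` induced by an execution `ρ`: events are the positions of
`ρ`, and the relations `po, rf, co, pb, mo, eo` are determined by the order of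
execution in `ρ`. -/
def traceOf (ρ : List REvent) : EDTrace where
  E := Finset.range ρ.length
  lbl := fun i => (evAt ρ i).lbl
  rel := fun r a b =>
    a < b ∧ b < ρ.length ∧
    match r with
    | .po => (evAt ρ a).mid = (evAt ρ b).mid
    | .rf => ∃ x, (evAt ρ a).lbl.IsWriteTo x ∧ (evAt ρ b).lbl.IsReadOf x ∧
        ∀ j, a < j → j < b → ¬ (evAt ρ j).lbl.IsWriteTo x
    | .co => ∃ x, (evAt ρ a).lbl.IsWriteTo x ∧ (evAt ρ b).lbl.IsWriteTo x
    | .pb => (evAt ρ a).lbl.IsPost ∧ (evAt ρ b).lbl.IsGet ∧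
        (evAt ρ a).posted = (evAt ρ b).mid
    | .mo => ∃ h', (evAt ρ a).lbl.PostsTo h' ∧ (evAt ρ b).lbl.PostsTo h'
    | .eo => ∃ h, (evAt ρ a).lbl = .get h ∧ (evAt ρ b).lbl = .get h


/-!
Every edge of `po ∪ rf ∪ fr ∪ co ∪ pb ∪ mo ∪ eo† ∪ qo` in `τ(ρ)` points forward in `ρ`, so the
happens-before relation is contained in the order of positions and cannot have a cycle. For `po`,
`rf`, `co`, `pb`, `mo` and `eo` this is built into `τ(ρ)`; for `fr` it holds because a read sees the
last preceding write to its variable. For `eo†` it holds because a handler finishes its current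
message before its next get, and for `qo` because message identifiers are allocated in increasing
order and mailboxes are FIFO. The last two rest on an invariant of reachable configurations that
explains mailboxes and current messages in terms of the history of posts and gets.
-/

theorem EDTrace.consistent_of_step_lt (τ : EDTrace) (hlt : ∀ a b, τ.step a b → a < b) :
    τ.Consistent := fun e he => by
  have hee := Relation.TransGen.mono (p := (· < ·)) hlt e e he
  rw [Relation.transGen_eq_self] at hee
  exact lt_irrefl e hee

theorem traceOf_fr_lt {ρ : List REvent} {a b : ℕ} (h : (traceOf ρ).fr a b) : a < b := by
  obtain ⟨w, ⟨-, -, x, ⟨_, _, hwx⟩, ⟨_, hax⟩, hnone⟩, ⟨hwb, -, y, ⟨_, _, hwy⟩, hby⟩⟩ := h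
  obtain rfl : x = y := by rw [hwx] at hwy; cases hwy; rfl
  rcases lt_trichotomy a b with hab | rfl | hba
  · exact hab
  · obtain ⟨_, _, hbx⟩ := hby
    rw [hax] at hbx
    cases hbx
  · exact absurd hby (hnone b hwb hba)

theorem reflTransGen_po_traceOf {ρ : List REvent} {g a : ℕ}
    (h : Relation.ReflTransGen ((traceOf ρ).rel .po) g a) :
    a = g ∨ g < a ∧ a < ρ.length ∧ (evAt ρ a).mid = (evAt ρ g).mid := by
  induction h with
  | refl => exact .inl rfl
  | tail _ hstep ih =>
    obtain ⟨hlt, hlen, hmid⟩ := hstep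
    rcases ih with rfl | ⟨hga, -, hmid'⟩
    · exact .inr ⟨hlt, hlen, hmid.symm⟩
    · exact .inr ⟨hga.trans hlt, hlen, hmid.symm.trans hmid'⟩

theorem evAt_mem {l : List REvent} {i : ℕ} (hi : i < l.length) : evAt l i ∈ l := by
  simp [evAt, List.getElem?_eq_getElem hi]

theorem evAt_take {l : List REvent} {i j : ℕ} (hij : i < j) : evAt (l.take j) i = evAt l i := by
  simp [evAt, hij]

theorem evAt_mem_take {l : List REvent} {i j : ℕ} (hij : i < j) (hi : i < l.length) :
    evAt l i ∈ l.take j :=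
  evAt_take hij ▸ evAt_mem (by simp [hij, hi])

section Transitions

variable {c c' : Config} {e : REvent}

theorem Step.posted_eq_fresh (st : Step c e c') (he : e.lbl.IsPost) : e.posted = c.fresh := by
  cases st <;> simp_all [EventLabel.IsPost]

theorem Step.mbox_eq_of_get {h : ℕ} (st : Step c e c') (he : e.lbl = .get h) :
    ∃ m q, c.mbox h = (e.mid, m) :: q := by
  cases st <;> simp only [EventLabel.get.injEq, reduceCtorEq] at he
  subst he
  exact ⟨_, _, ‹_›⟩

theorem Step.cur_eq_of_not_get (st : Step c e c') (he : ¬ e.lbl.IsGet) :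
    ∃ r, c.cur e.lbl.hnd = some (e.mid, r) := by
  cases st
  case get => exact absurd ⟨_, rfl⟩ he
  all_goals exact ⟨_, ‹_›⟩

theorem Step.exists_cur_of_cur {h m : ℕ} {r : Msg} (st : Step c e c')
    (hc : c'.cur h = some (m, r)) :
    ∃ m' r', c.cur h = some (m', r') ∧ m = if e.lbl = .get h then e.mid else m' := by
  cases st <;> simp only [Function.update_apply] at hc <;> split_ifs at hc with hh
  all_goals first | (subst hh; simp_all) | simp_all [Ne.symm hh]

theorem Steps.of_append {l₁ l₂ : List REvent} (hs : Steps c (l₁ ++ l₂) c') :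
    ∃ c₁, Steps c l₁ c₁ ∧ Steps c₁ l₂ c' := by
  induction l₁ generalizing c with
  | nil => exact ⟨c, .nil _, hs⟩
  | cons e l₁ ih =>
    obtain _ | ⟨st, hs'⟩ := hs
    obtain ⟨c₁, hs₁, hs₂⟩ := ih hs'
    exact ⟨c₁, .cons st hs₁, hs₂⟩

end Transitions

def sent (l : List REvent) : List (ℕ × ℕ) :=
  l.filterMap fun e => match e.lbl with
    | .post _ h' => some (h', e.posted)
    | _ => none

def postedTo (l : List REvent) (h : ℕ) : List ℕ :=
  ((sent l).filter (·.1 = h)).map Prod.snd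

def received (l : List REvent) (h : ℕ) : List ℕ :=
  l.filterMap fun e => if e.lbl = .get h then some e.mid else none

@[simp] theorem sent_append (l l' : List REvent) : sent (l ++ l') = sent l ++ sent l' :=
  List.filterMap_append

@[simp] theorem postedTo_append (l l' : List REvent) (h : ℕ) :
    postedTo (l ++ l') h = postedTo l h ++ postedTo l' h := by
  simp [postedTo]

@[simp] theorem received_append (l l' : List REvent) (h : ℕ) :
    received (l ++ l') h = received l h ++ received l' h :=
  List.filterMap_append

theorem sent_singleton (e : REvent) :
    sent [e] = match e.lbl with
      | .post _ h' => [(h', e.posted)]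
      | _ => [] := by
  unfold sent; split <;> simp [*]

theorem received_singleton (e : REvent) (h : ℕ) :
    received [e] h = if e.lbl = .get h then [e.mid] else [] := by
  unfold received; split_ifs <;> simp [*]

theorem mem_postedTo {l : List REvent} {h v : ℕ} : v ∈ postedTo l h ↔ (h, v) ∈ sent l := by
  simp [postedTo]

theorem mem_sent {l : List REvent} {e : REvent} {g h : ℕ} (he : e ∈ l)
    (hl : e.lbl = .post g h) : (h, e.posted) ∈ sent l :=
  List.mem_filterMap.mpr ⟨e, he, by simp [hl]⟩

theorem mem_received {l : List REvent} {e : REvent} {h : ℕ} (he : e ∈ l)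
    (hl : e.lbl = .get h) : e.mid ∈ received l h :=
  List.mem_filterMap.mpr ⟨e, he, by simp [hl]⟩

/-- The current message of `h` is the last one it dequeued or, before its first get, its initial
message, whose identifier is `h`; identifiers of posted messages start at `P.numHandlers`. -/
structure ExecInvariant (P : Program) (l : List REvent) (c : Config) : Prop where
  fresh_ge : P.numHandlers ≤ c.fresh
  sent_ids : (sent l).map Prod.snd = List.range' P.numHandlers (c.fresh - P.numHandlers)
  mbox : ∀ h, received l h ++ (c.mbox h).map Prod.fst = postedTo l h
  cur : ∀ h m r, c.cur h = some (m, r) → h < P.numHandlers ∧ m = (received l h).getLastD h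

namespace ExecInvariant

variable {P : Program} {l : List REvent} {c c' : Config}

theorem init (P : Program) : ExecInvariant P [] (initConfig P) where
  fresh_ge := le_rfl
  sent_ids := by simp [sent, initConfig]
  mbox h := by simp [received, postedTo, sent, initConfig]
  cur h m r hc := by
    simp only [initConfig] at hc
    split_ifs at hc with hh
    cases hc
    simp [received, hh]

theorem cur_step {e : REvent} (inv : ExecInvariant P l c) (st : Step c e c') {h m : ℕ} {r : Msg}
    (hc : c'.cur h = some (m, r)) :
    h < P.numHandlers ∧ m = (received (l ++ [e]) h).getLastD h := by
  obtain ⟨m', r', hc', rfl⟩ := st.exists_cur_of_cur hc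
  obtain ⟨hlt, rfl⟩ := inv.cur h m' r' hc'
  refine ⟨hlt, ?_⟩
  rw [received_append, received_singleton]
  split_ifs <;> simp

theorem step {e : REvent} (inv : ExecInvariant P l c) (st : Step c e c') :
    ExecInvariant P (l ++ [e]) c' := by
  have hN := inv.fresh_ge
  refine ⟨?_, ?_, ?_, fun h m r => inv.cur_step st⟩
  · cases st <;> simp <;> omega
  · cases st <;> simp [sent_singleton, inv.sent_ids]
    have : c.fresh + 1 - P.numHandlers = c.fresh - P.numHandlers + 1 := by omega
    rw [this, List.range'_concat]
    simp; omega
  · intro h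
    rw [received_append, postedTo_append, ← inv.mbox h]
    cases st with
    | post _ _ h' _ _ _ =>
      by_cases hh : h = h'
      · subst hh; simp [received_singleton, postedTo, sent_singleton]
      · simp [received_singleton, postedTo, sent_singleton, hh, Ne.symm hh]
    | get h₀ _ _ _ _ _ hmb =>
      by_cases hh : h = h₀
      · subst hh; simp [received_singleton, hmb, postedTo, sent_singleton]
      · simp [received_singleton, postedTo, sent_singleton, hh, Ne.symm hh]
    | _ => simp [received_singleton, postedTo, sent_singleton]

theorem steps {l' : List REvent} (inv : ExecInvariant P l c) (hs : Steps c l' c') :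
    ExecInvariant P (l ++ l') c' := by
  induction hs generalizing l with
  | nil => simpa using inv
  | cons st _ ih => simpa using ih (inv.step st)

theorem lt_fresh_of_mem_sent (inv : ExecInvariant P l c) {h v : ℕ} (hv : (h, v) ∈ sent l) :
    P.numHandlers ≤ v ∧ v < c.fresh := by
  have hv' : v ∈ (sent l).map Prod.snd := List.mem_map_of_mem (f := Prod.snd) hv
  rw [inv.sent_ids, List.mem_range'_1] at hv'
  omega

theorem target_unique (inv : ExecInvariant P l c) {h₁ h₂ v : ℕ} (h1 : (h₁, v) ∈ sent l)
    (h2 : (h₂, v) ∈ sent l) : h₁ = h₂ := by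
  have hnd : ((sent l).map Prod.snd).Nodup := inv.sent_ids ▸ List.nodup_range'
  exact congrArg Prod.fst (List.inj_on_of_nodup_map hnd h1 h2 rfl)

theorem postedTo_sorted (inv : ExecInvariant P l c) (h : ℕ) :
    (postedTo l h).Pairwise (· < ·) :=
  (inv.sent_ids ▸ List.pairwise_lt_range').sublist (List.filter_sublist.map Prod.snd)

theorem received_sorted (inv : ExecInvariant P l c) (h : ℕ) :
    (received l h).Pairwise (· < ·) :=
  (List.pairwise_append.mp (inv.mbox h ▸ inv.postedTo_sorted h)).1

theorem mem_sent_of_mem_received (inv : ExecInvariant P l c) {h v : ℕ}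
    (hv : v ∈ received l h) : (h, v) ∈ sent l :=
  mem_postedTo.mp (inv.mbox h ▸ List.mem_append_left _ hv)

end ExecInvariant

section Execution

variable {P : Program} {ρ : List REvent} {c : Config}

theorem Steps.execInvariant (hs : Steps (initConfig P) ρ c) : ExecInvariant P ρ c := by
  simpa using (ExecInvariant.init P).steps hs

theorem Steps.exists_execInvariant_take (hs : Steps (initConfig P) ρ c) {i : ℕ}
    (hi : i < ρ.length) : ∃ c₁ c₂, ExecInvariant P (ρ.take i) c₁ ∧ Step c₁ (evAt ρ i) c₂ := by
  rw [← List.take_append_drop i ρ, List.drop_eq_getElem_cons hi] at hs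
  obtain ⟨c₁, hs₁, hs₂⟩ := hs.of_append
  cases hs₂ with
  | cons st _ =>
    exact ⟨c₁, _, by simpa using (ExecInvariant.init P).steps hs₁,
      by simpa [evAt, List.getElem?_eq_getElem hi] using st⟩

theorem Steps.mem_sent_of_get (hs : Steps (initConfig P) ρ c) {i h : ℕ} (hi : i < ρ.length)
    (hl : (evAt ρ i).lbl = .get h) : (h, (evAt ρ i).mid) ∈ sent ρ :=
  hs.execInvariant.mem_sent_of_mem_received (mem_received (evAt_mem hi) hl)

theorem Steps.posted_lt_posted (hs : Steps (initConfig P) ρ c) {p q g h : ℕ} (hpq : p < q)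
    (hq : q < ρ.length) (hp : (evAt ρ p).lbl = .post g h) (hq' : (evAt ρ q).lbl.IsPost) :
    (evAt ρ p).posted < (evAt ρ q).posted := by
  obtain ⟨c₁, _, inv, st⟩ := hs.exists_execInvariant_take hq
  rw [st.posted_eq_fresh hq']
  exact (inv.lt_fresh_of_mem_sent (mem_sent (evAt_mem_take hpq (hpq.trans hq)) hp)).2

theorem Steps.mid_lt_mid_of_get (hs : Steps (initConfig P) ρ c) {i j h : ℕ} (hij : i < j)
    (hj : j < ρ.length) (hi' : (evAt ρ i).lbl = .get h) (hj' : (evAt ρ j).lbl = .get h) :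
    (evAt ρ i).mid < (evAt ρ j).mid := by
  obtain ⟨c₁, _, inv, st⟩ := hs.exists_execInvariant_take hj
  obtain ⟨m, q, hmb⟩ := st.mbox_eq_of_get hj'
  have hsorted := inv.mbox h ▸ inv.postedTo_sorted h
  rw [hmb] at hsorted
  exact List.pairwise_append.mp hsorted |>.2.2 _
    (mem_received (evAt_mem_take hij (hij.trans hj)) hi') _ (by simp)

theorem Steps.lt_of_get_mid_lt (hs : Steps (initConfig P) ρ c) {i j h : ℕ} (hi : i < ρ.length)
    (hi' : (evAt ρ i).lbl = .get h) (hj' : (evAt ρ j).lbl = .get h)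
    (hm : (evAt ρ i).mid < (evAt ρ j).mid) : i < j := by
  by_contra! hji
  rcases hji.lt_or_eq with hji | rfl
  · exact (hs.mid_lt_mid_of_get hji hi hj' hi').not_gt hm
  · exact hm.false

theorem Steps.eq_of_get_mid_eq (hs : Steps (initConfig P) ρ c) {i j h₁ h₂ : ℕ}
    (hi : i < ρ.length) (hj : j < ρ.length) (hi' : (evAt ρ i).lbl = .get h₁)
    (hj' : (evAt ρ j).lbl = .get h₂) (hm : (evAt ρ i).mid = (evAt ρ j).mid) : i = j := by
  obtain rfl : h₁ = h₂ :=
    hs.execInvariant.target_unique (hs.mem_sent_of_get hi hi') (hm ▸ hs.mem_sent_of_get hj hj')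
  by_contra hij
  rcases Ne.lt_or_gt hij with hij | hji
  · exact (hs.mid_lt_mid_of_get hij hj hi' hj').ne hm
  · exact (hs.mid_lt_mid_of_get hji hi hj' hi').ne' hm

theorem Steps.lt_get_of_mid_eq (hs : Steps (initConfig P) ρ c) {a g g' h : ℕ}
    (ha : a < ρ.length) (hna : ¬ (evAt ρ a).lbl.IsGet) (hgg' : g < g') (hg'len : g' < ρ.length)
    (hg : (evAt ρ g).lbl = .get h) (hg' : (evAt ρ g').lbl = .get h)
    (hmid : (evAt ρ a).mid = (evAt ρ g).mid) : a < g' := by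
  obtain ⟨c₁, _, inv, st⟩ := hs.exists_execInvariant_take ha
  obtain ⟨hk, hlast⟩ := inv.cur _ _ _ (st.cur_eq_of_not_get hna).choose_spec
  by_contra! hg'a
  replace hg'a : g' < a := hg'a.lt_of_ne fun he => hna (he ▸ ⟨h, hg'⟩)
  have hga : g < a := hgg'.trans hg'a
  -- `g` dequeued a posted message, so `a` does not run in the initial message of its handler.
  have hN := (hs.execInvariant.lt_fresh_of_mem_sent (hs.mem_sent_of_get (hga.trans ha) hg)).1
  have hne : received (ρ.take a) (evAt ρ a).lbl.hnd ≠ [] := by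
    intro hnil
    rw [hnil, List.getLastD_nil] at hlast
    omega
  rw [List.getLastD_eq_getLast?, List.getLast?_eq_some_getLast hne, Option.getD_some, hmid]
    at hlast
  obtain rfl : (evAt ρ a).lbl.hnd = h := inv.target_unique
    (inv.mem_sent_of_mem_received (hlast ▸ List.getLast_mem hne))
    (inv.mem_sent_of_mem_received (mem_received (evAt_mem_take hga (hga.trans ha)) hg))
  have hmem_g' := mem_received (evAt_mem_take hg'a (hg'a.trans ha)) hg'
  have := ((inv.received_sorted _).imp le_of_lt).rel_getLast hmem_g'
  have := hs.mid_lt_mid_of_get hgg' hg'len hg hg'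
  omega

theorem Steps.eoDag_lt (hs : Steps (initConfig P) ρ c) {a b : ℕ} (h : (traceOf ρ).eoDag a b) :
    a < b := by
  obtain ⟨g, g', ⟨-, hga⟩, ⟨-, hg'b⟩, hgg', hg'len, h, hg, hg'⟩ := h
  have hg'b : g' ≤ b := by
    rcases reflTransGen_po_traceOf hg'b with rfl | ⟨hlt, -⟩
    exacts [le_rfl, hlt.le]
  refine lt_of_lt_of_le ?_ hg'b
  rcases reflTransGen_po_traceOf hga with rfl | ⟨-, ha, hmid⟩
  · exact hgg'
  by_cases hna : (evAt ρ a).lbl.IsGet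
  · obtain ⟨_, ha'⟩ := hna
    rwa [hs.eq_of_get_mid_eq ha (hgg'.trans hg'len) ha' hg hmid]
  · exact hs.lt_get_of_mid_eq ha hna hgg' hg'len hg hg' hmid

theorem Steps.qo_lt (hs : Steps (initConfig P) ρ c) {a b : ℕ} (h : (traceOf ρ).qo a b) :
    a < b := by
  obtain ⟨p, q, ⟨hpa, ha, -, ⟨ha', hla⟩, hpmid⟩, ⟨-, hb, -, ⟨hb', hlb⟩, hqmid⟩,
    hpq, hq, h', ⟨_, hlp⟩, ⟨_, hlq⟩⟩ := h
  have inv := hs.execInvariant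
  obtain rfl : ha' = h' := inv.target_unique (hs.mem_sent_of_get ha hla)
    (hpmid ▸ mem_sent (evAt_mem (hpa.trans ha)) hlp)
  obtain rfl : hb' = ha' := inv.target_unique (hs.mem_sent_of_get hb hlb)
    (hqmid ▸ mem_sent (evAt_mem hq) hlq)
  refine hs.lt_of_get_mid_lt ha hla hlb ?_
  rw [← hpmid, ← hqmid]
  exact hs.posted_lt_posted hpq hq hlp ⟨_, _, hlq⟩

theorem Steps.step_traceOf_lt (hs : Steps (initConfig P) ρ c) {a b : ℕ}
    (h : (traceOf ρ).step a b) : a < b := by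
  rcases h with hpo | hrf | hfr | hco | hpb | hmo | heo | hqo
  exacts [hpo.1, hrf.1, traceOf_fr_lt hfr, hco.1, hpb.1, hmo.1, hs.eoDag_lt heo, hs.qo_lt hqo]

end Execution

/-- For every event-driven program `P` and every execution
`ρ` of `P`, the induced trace `τ(ρ)` is axiomatically consistent, i.e. the
relation `po ∪ rf ∪ fr ∪ co ∪ pb ∪ mo ∪ eo† ∪ qo` of `τ(ρ)` is acyclic. -/
theorem statement2 (P : Program) (ρ : List REvent) (hexec : IsExec P ρ) :
    (traceOf ρ).Consistent := by
  obtain ⟨c, hs⟩ := hexec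
  exact (traceOf ρ).consistent_of_step_lt fun _ _ => hs.step_traceOf_lt
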